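/- arXiv:2502.02705 — 2 statements merged into one kernel-verified Lean document; each statement's English description precedes it below -/
import Mathlib

section
/- (Suboptimality of approximately H-step-optimal policies) Assume: (a) V_sim is improvable with respect to the real MDP (for all s there is an action a with E_{s'∼p(·|s,a)}[γV_sim(s')] - V_sim(s) ≥ -r(s)); (b) max_s |V_sim(s) - V*(s)| < ε, where V* is the optimal infinite-horizon discounted value function of the real MDP; (c) the stationary policy π satisfies Q_H^*(s,π) - V_H^*(s) ≥ -δ for all s, where Q_H^*(s,π) = E_{a∼π(·|s), s'∼p(·|s,a)}[γ V_{H-1}^*(s') + r(s) + γV_sim(s') - V_sim(s)]. Then the infinite-horizon value of π in the real MDP satisfies V*(s) - V^π(s) ≤ γ^H ε + δ/(1-γ) for every state s. -/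
open Finset

section MDP

variable {S A : Type} [Fintype S] [Fintype A] [DecidableEq S]

/-- `q` is a Markov transition kernel (pmf over next states for each state-action). -/
def IsKernel (q : S → A → S → ℝ) : Prop :=
  ∀ s a, (∀ s', 0 ≤ q s a s') ∧ (∑ s', q s a s') = 1

/-- A time-dependent stochastic policy sequence. -/
def IsPolicySeq (π : ℕ → S → A → ℝ) : Prop :=
  ∀ t s, (∀ a, 0 ≤ π t s a) ∧ (∑ a, π t s a) = 1

/-- A stationary stochastic policy. -/
def IsStationaryPolicy (π : S → A → ℝ) : Prop :=
  ∀ s, (∀ a, 0 ≤ π s a) ∧ (∑ a, π s a) = 1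

/-- H-step value `E[γ^H V(s_H) + ∑_{t<H} γ^t r(s_t)]` of a time-dependent policy under
kernel `q`, with terminal value `V`. -/
noncomputable def valH (q : S → A → S → ℝ) (r : S → ℝ) (γ : ℝ) (V : S → ℝ) :
    ℕ → (ℕ → S → A → ℝ) → S → ℝ
  | 0, _, s => V s
  | H + 1, π, s =>
      r s + γ * ∑ a, π 0 s a * ∑ s', q s a s' * valH q r γ V H (fun t => π (t + 1)) s'

/-- Optimal H-step value: supremum over H-step (time-dependent stochastic) policies. -/
noncomputable def VHopt (q : S → A → S → ℝ) (r : S → ℝ) (γ : ℝ) (V : S → ℝ)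
    (H : ℕ) (s : S) : ℝ :=
  sSup {x | ∃ π, IsPolicySeq π ∧ valH q r γ V H π s = x}

/-- One step of the state-distribution dynamics induced by kernel `q` and stationary
policy `π`. -/
noncomputable def pushforward (q : S → A → S → ℝ) (π : S → A → ℝ) (μ : S → ℝ) : S → ℝ :=
  fun s' => ∑ s, μ s * ∑ a, π s a * q s a s'

/-- Distribution of the state at time `t` of the Markov chain induced by `π` from `s₀`. -/
noncomputable def stateDist (q : S → A → S → ℝ) (π : S → A → ℝ) (s0 : S) (t : ℕ) :
    S → ℝ :=
  (pushforward q π)^[t] (fun s => if s = s0 then 1 else 0)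

/-- Infinite-horizon discounted value of stationary policy `π` from `s₀`. -/
noncomputable def Vinf (q : S → A → S → ℝ) (r : S → ℝ) (γ : ℝ) (π : S → A → ℝ)
    (s0 : S) : ℝ :=
  ∑' t : ℕ, γ ^ t * ∑ s, stateDist q π s0 t s * r s

/-- Optimal infinite-horizon discounted value. -/
noncomputable def Vstar (q : S → A → S → ℝ) (r : S → ℝ) (γ : ℝ) (s0 : S) : ℝ :=
  sSup {x | ∃ π, IsStationaryPolicy π ∧ Vinf q r γ π s0 = x}

end MDP


/-! Write `W = VHopt H` for the optimal `H`-step value with terminal value `V_sim`, so that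
`V_H^* = W - V_sim`. Improvability makes `W` monotone in the horizon, so the `δ`-optimality of `π`
gives the approximate Bellman inequality `W ≤ r + γ P^π W + δ`. As `V^π = r + γ P^π V^π` and
`P^π` averages, the maximum of `W - V^π` is at most `γ` times itself plus `δ`, whence
`W - V^π ≤ δ / (1 - γ)`. Conversely, running any stationary `π'` for `H` steps and then collecting
`V_sim ≥ V^π' - ε` loses at most `γ^H ε` against `V^π'`, so `V* ≤ W + γ^H ε`. -/

open Matrix

namespace Matrix

variable {R n : Type*} [Fintype n] [DecidableEq n]

section PartialOrder

variable [CommRing R] [PartialOrder R] [IsOrderedRing R] {M : Matrix n n R}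

lemma mulVec_mono_of_mem_rowStochastic (hM : M ∈ rowStochastic R n) {x y : n → R}
    (hxy : x ≤ y) : M *ᵥ x ≤ M *ᵥ y := fun i => by
  have := nonneg_mulVec_of_mem_rowStochastic hM (x := y - x) (fun j => sub_nonneg.2 (hxy j)) i
  rwa [mulVec_sub, Pi.sub_apply, sub_nonneg] at this

lemma mulVec_const_of_mem_rowStochastic (hM : M ∈ rowStochastic R n) (c : R) :
    M *ᵥ (fun _ => c) = fun _ => c := by
  have h := congrArg (c • ·) (one_vecMul_of_mem_rowStochastic hM)
  simp only [← mulVec_smul] at h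
  simpa [Pi.smul_def] using h

lemma mulVec_apply_le_of_mem_rowStochastic (hM : M ∈ rowStochastic R n) {x : n → R} {c : R}
    (hx : ∀ j, x j ≤ c) (i : n) : (M *ᵥ x) i ≤ c := by
  simpa [mulVec_const_of_mem_rowStochastic hM] using
    mulVec_mono_of_mem_rowStochastic hM (y := fun _ => c) hx i

end PartialOrder

lemma abs_mulVec_apply_le_of_mem_rowStochastic [CommRing R] [LinearOrder R] [IsOrderedRing R]
    {M : Matrix n n R} (hM : M ∈ rowStochastic R n) {x : n → R} {c : R}
    (hx : ∀ j, |x j| ≤ c) (i : n) : |(M *ᵥ x) i| ≤ c := by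
  refine abs_le.2 ⟨?_, mulVec_apply_le_of_mem_rowStochastic hM (fun j => (abs_le.1 (hx j)).2) i⟩
  have := mulVec_apply_le_of_mem_rowStochastic hM (x := -x)
    (fun j => (neg_le_abs (x j)).trans (hx j)) i
  rw [mulVec_neg, Pi.neg_apply] at this
  exact neg_le.1 this

end Matrix

section DiscountedSum

variable {n : Type*} [Fintype n] [DecidableEq n] {M : Matrix n n ℝ} {γ : ℝ}

lemma summable_discounted_mulVec (hM : M ∈ rowStochastic ℝ n) (hγ0 : 0 ≤ γ) (hγ1 : γ < 1)
    (r : n → ℝ) (i : n) : Summable fun t : ℕ => γ ^ t * (M ^ t *ᵥ r) i := by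
  refine .of_norm_bounded ((summable_geometric_of_lt_one hγ0 hγ1).mul_left ‖r‖) fun t => ?_
  rw [Real.norm_eq_abs, abs_mul, abs_of_nonneg (pow_nonneg hγ0 t), mul_comm]
  gcongr
  exact abs_mulVec_apply_le_of_mem_rowStochastic (pow_mem hM t) (norm_le_pi_norm r) i

lemma tsum_discounted_mulVec_le (hM : M ∈ rowStochastic ℝ n) (hγ0 : 0 ≤ γ) (hγ1 : γ < 1)
    (r : n → ℝ) (i : n) : ∑' t : ℕ, γ ^ t * (M ^ t *ᵥ r) i ≤ ‖r‖ / (1 - γ) := by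
  rw [div_eq_mul_inv, ← tsum_geometric_of_lt_one hγ0 hγ1, ← tsum_mul_left]
  refine (summable_discounted_mulVec hM hγ0 hγ1 r i).tsum_le_tsum (fun t => ?_)
    ((summable_geometric_of_lt_one hγ0 hγ1).mul_left ‖r‖)
  rw [mul_comm]
  gcongr
  exact (abs_le.1 (abs_mulVec_apply_le_of_mem_rowStochastic (pow_mem hM t)
    (norm_le_pi_norm r) i)).2

lemma tsum_discounted_mulVec_bellman (hM : M ∈ rowStochastic ℝ n) (hγ0 : 0 ≤ γ) (hγ1 : γ < 1)
    (r : n → ℝ) (i : n) :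
    ∑' t : ℕ, γ ^ t * (M ^ t *ᵥ r) i
      = r i + γ * (M *ᵥ fun j => ∑' t : ℕ, γ ^ t * (M ^ t *ᵥ r) j) i := by
  have hshift : HasSum (fun t : ℕ => γ ^ (t + 1) * (M ^ (t + 1) *ᵥ r) i)
      (γ * (M *ᵥ fun j => ∑' t : ℕ, γ ^ t * (M ^ t *ᵥ r) j) i) := by
    have h := hasSum_sum fun j (_ : j ∈ Finset.univ) =>
      ((summable_discounted_mulVec hM hγ0 hγ1 r j).hasSum.mul_left (M i j)).mul_left γ
    have hterm : ∀ t : ℕ, γ ^ (t + 1) * (M ^ (t + 1) *ᵥ r) i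
        = ∑ j, γ * (M i j * (γ ^ t * (M ^ t *ᵥ r) j)) := fun t => by
      rw [pow_succ' γ, pow_succ' M, ← mulVec_mulVec]
      generalize M ^ t *ᵥ r = w
      simp only [mulVec, dotProduct, Finset.mul_sum]
      exact Finset.sum_congr rfl fun j _ => by ring
    have hval : γ * (M *ᵥ fun j => ∑' t : ℕ, γ ^ t * (M ^ t *ᵥ r) j) i
        = ∑ j, γ * (M i j * ∑' t : ℕ, γ ^ t * (M ^ t *ᵥ r) j) := by
      simp only [mulVec, dotProduct, Finset.mul_sum]
    rw [funext hterm, hval]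
    exact h
  rw [(summable_discounted_mulVec hM hγ0 hγ1 r i).tsum_eq_zero_add, hshift.tsum_eq]
  simp

lemma le_div_one_sub_of_le_mulVec (hM : M ∈ rowStochastic ℝ n) (hγ0 : 0 ≤ γ) (hγ1 : γ < 1)
    {g : n → ℝ} {δ : ℝ} (hg : ∀ i, g i ≤ γ * (M *ᵥ g) i + δ) (i : n) :
    g i ≤ δ / (1 - γ) := by
  have : Nonempty n := ⟨i⟩
  obtain ⟨i₀, hi₀⟩ := Finite.exists_max g
  have hmax : g i₀ ≤ γ * g i₀ + δ := (hg i₀).trans (by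
    gcongr
    exact mulVec_apply_le_of_mem_rowStochastic hM hi₀ i₀)
  exact (hi₀ i).trans ((le_div_iff₀ (by linarith)).2 (by linarith))

end DiscountedSum

section MDPFacts

variable {S A : Type} [Fintype S] [Fintype A] {q : S → A → S → ℝ} {r : S → ℝ} {γ : ℝ}

def policyMatrix (q : S → A → S → ℝ) (π : S → A → ℝ) : Matrix S S ℝ :=
  Matrix.of fun s s' => ∑ a, π s a * q s a s'

lemma mulVec_policyMatrix_apply (q : S → A → S → ℝ) (π : S → A → ℝ) (f : S → ℝ) (s : S) :
    (policyMatrix q π *ᵥ f) s = ∑ a, π s a * ∑ s', q s a s' * f s' := by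
  simp only [policyMatrix, mulVec, dotProduct, of_apply, Finset.sum_mul, Finset.mul_sum]
  rw [Finset.sum_comm]
  exact Finset.sum_congr rfl fun _ _ => Finset.sum_congr rfl fun _ _ => by ring

variable [DecidableEq S]

lemma policyMatrix_mem_rowStochastic (hq : IsKernel q) {π : S → A → ℝ}
    (hπ : IsStationaryPolicy π) : policyMatrix q π ∈ rowStochastic ℝ S := by
  refine mem_rowStochastic_iff_sum.2 ⟨fun s s' => ?_, fun s => ?_⟩
  · exact Finset.sum_nonneg fun a _ => mul_nonneg ((hπ s).1 a) ((hq s a).1 s')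
  · have := mulVec_policyMatrix_apply q π (fun _ => 1) s
    simp only [mulVec, dotProduct, mul_one, (hq s _).2, (hπ s).2] at this
    exact this

lemma stateDist_eq_vecMul (π : S → A → ℝ) (s₀ : S) (t : ℕ) :
    stateDist q π s₀ t = Pi.single s₀ 1 ᵥ* policyMatrix q π ^ t := by
  induction t with
  | zero => ext s; simp [stateDist, Pi.single_apply]
  | succ t ih =>
    rw [stateDist, Function.iterate_succ_apply', ← stateDist, ih, pow_succ, ← vecMul_vecMul]
    rfl

lemma Vinf_eq_tsum (π : S → A → ℝ) (s₀ : S) :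
    Vinf q r γ π s₀ = ∑' t : ℕ, γ ^ t * (policyMatrix q π ^ t *ᵥ r) s₀ := by
  refine tsum_congr fun t => ?_
  rw [← dotProduct, stateDist_eq_vecMul, ← dotProduct_mulVec, single_dotProduct, one_mul]

lemma Vinf_le (hq : IsKernel q) (hγ0 : 0 ≤ γ) (hγ1 : γ < 1) {π : S → A → ℝ}
    (hπ : IsStationaryPolicy π) (s : S) :
    Vinf q r γ π s ≤ ‖r‖ / (1 - γ) := by
  rw [Vinf_eq_tsum]
  exact tsum_discounted_mulVec_le (policyMatrix_mem_rowStochastic hq hπ) hγ0 hγ1 r s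

lemma Vinf_eq_bellman (hq : IsKernel q) (hγ0 : 0 ≤ γ) (hγ1 : γ < 1) {π : S → A → ℝ}
    (hπ : IsStationaryPolicy π) (s : S) :
    Vinf q r γ π s = r s + γ * (policyMatrix q π *ᵥ Vinf q r γ π) s := by
  have hV : Vinf q r γ π = fun j => ∑' t : ℕ, γ ^ t * (policyMatrix q π ^ t *ᵥ r) j :=
    funext (Vinf_eq_tsum π)
  rw [hV]
  exact tsum_discounted_mulVec_bellman (policyMatrix_mem_rowStochastic hq hπ) hγ0 hγ1 r s

lemma Vinf_le_Vstar (hq : IsKernel q) (hγ0 : 0 ≤ γ) (hγ1 : γ < 1) {π : S → A → ℝ}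
    (hπ : IsStationaryPolicy π) (s : S) :
    Vinf q r γ π s ≤ Vstar q r γ s :=
  le_csSup ⟨‖r‖ / (1 - γ), by rintro _ ⟨π', hπ', rfl⟩; exact Vinf_le hq hγ0 hγ1 hπ' s⟩
    ⟨π, hπ, rfl⟩

end MDPFacts

section FiniteHorizon

variable {S A : Type} [Fintype A]

lemma IsPolicySeq.shift {π : ℕ → S → A → ℝ} (hπ : IsPolicySeq π) :
    IsPolicySeq fun t => π (t + 1) :=
  fun t => hπ (t + 1)

variable [Fintype S] {q : S → A → S → ℝ} {r : S → ℝ} {γ : ℝ}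

def IsImprovable (q : S → A → S → ℝ) (r : S → ℝ) (γ : ℝ) (V : S → ℝ) : Prop :=
  ∀ s, ∃ a, (∑ s', q s a s' * (γ * V s')) - V s ≥ -(r s)

lemma valH_succ (V : S → ℝ) (k : ℕ) (π : ℕ → S → A → ℝ) (s : S) :
    valH q r γ V (k + 1) π s
      = r s + γ * (policyMatrix q (π 0) *ᵥ valH q r γ V k (fun t => π (t + 1))) s := by
  rw [valH, mulVec_policyMatrix_apply]

lemma valH_congr (V : S → ℝ) (k : ℕ) {π π' : ℕ → S → A → ℝ} (h : ∀ t < k, π t = π' t) :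
    valH q r γ V k π = valH q r γ V k π' := by
  induction k generalizing π π' with
  | zero => rfl
  | succ k ih =>
    ext s
    rw [valH_succ, valH_succ, h 0 k.succ_pos, ih fun t ht => h (t + 1) (by omega)]

lemma valH_succ_eq_valH_backup (V : S → ℝ) (k : ℕ) (π : ℕ → S → A → ℝ) :
    valH q r γ V (k + 1) π
      = valH q r γ (fun x => r x + γ * (policyMatrix q (π k) *ᵥ V) x) k π := by
  induction k generalizing π with
  | zero => ext s; rw [valH_succ]; rfl
  | succ k ih =>
    ext s
    rw [valH_succ, ih, valH_succ]

variable [DecidableEq S]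

lemma valH_le (hq : IsKernel q) (hγ0 : 0 ≤ γ) (hγ1 : γ ≤ 1) (V : S → ℝ) (k : ℕ)
    {π : ℕ → S → A → ℝ} (hπ : IsPolicySeq π) (s : S) :
    valH q r γ V k π s ≤ k * ‖r‖ + ‖V‖ := by
  induction k generalizing π s with
  | zero => simpa [valH] using (le_abs_self _).trans (norm_le_pi_norm V s)
  | succ k ih =>
    have hstep : (policyMatrix q (π 0) *ᵥ valH q r γ V k fun t => π (t + 1)) s
        ≤ k * ‖r‖ + ‖V‖ :=
      mulVec_apply_le_of_mem_rowStochastic (policyMatrix_mem_rowStochastic hq (hπ 0))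
        (fun s' => ih hπ.shift s') s
    have hr : r s ≤ ‖r‖ := (le_abs_self _).trans (norm_le_pi_norm r s)
    have hnonneg : 0 ≤ k * ‖r‖ + ‖V‖ := by positivity
    rw [valH_succ]
    push_cast
    linarith [mul_le_mul_of_nonneg_left hstep hγ0, mul_le_of_le_one_left hnonneg hγ1]

lemma valH_le_VHopt (hq : IsKernel q) (hγ0 : 0 ≤ γ) (hγ1 : γ ≤ 1) (V : S → ℝ) (k : ℕ)
    {π : ℕ → S → A → ℝ} (hπ : IsPolicySeq π) (s : S) :
    valH q r γ V k π s ≤ VHopt q r γ V k s :=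
  le_csSup ⟨k * ‖r‖ + ‖V‖, by rintro _ ⟨π', hπ', rfl⟩; exact valH_le hq hγ0 hγ1 V k hπ' s⟩
    ⟨π, hπ, rfl⟩

lemma valH_mono (hq : IsKernel q) (hγ0 : 0 ≤ γ) {V V' : S → ℝ} (hVV' : V ≤ V') (k : ℕ)
    {π : ℕ → S → A → ℝ} (hπ : IsPolicySeq π) : valH q r γ V k π ≤ valH q r γ V' k π := by
  induction k generalizing π with
  | zero => exact hVV'
  | succ k ih =>
    intro s
    rw [valH_succ, valH_succ]
    gcongr
    exact mulVec_mono_of_mem_rowStochastic (policyMatrix_mem_rowStochastic hq (hπ 0))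
      (ih hπ.shift) s

lemma VHopt_le_VHopt_succ (hq : IsKernel q) (hγ0 : 0 ≤ γ) (hγ1 : γ ≤ 1) {V : S → ℝ}
    (himp : IsImprovable q r γ V) (k : ℕ) (s : S) :
    VHopt q r γ V k s ≤ VHopt q r γ V (k + 1) s := by
  classical
  choose g hg using himp
  set greedy : S → A → ℝ := fun x a => if a = g x then 1 else 0
  have hgreedy : IsStationaryPolicy greedy := fun x =>
    ⟨fun a => by simp only [greedy]; split <;> norm_num, by simp [greedy]⟩
  have hbackup : V ≤ fun x => r x + γ * (policyMatrix q greedy *ᵥ V) x := fun x => by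
    have hx := hg x
    have hstep : (policyMatrix q greedy *ᵥ V) x = ∑ s', q x (g x) s' * V s' := by
      simp [mulVec_policyMatrix_apply, greedy]
    show V x ≤ r x + γ * _
    rw [hstep]
    rw [show ∑ s', q x (g x) s' * (γ * V s') = γ * ∑ s', q x (g x) s' * V s' by
      rw [Finset.mul_sum]; exact Finset.sum_congr rfl fun _ _ => by ring] at hx
    linarith
  refine csSup_le ⟨_, fun _ => greedy, fun _ => hgreedy, rfl⟩ ?_
  rintro _ ⟨π, hπ, rfl⟩
  set π' := Function.update π k greedy
  have hπ' : IsPolicySeq π' := fun t => by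
    by_cases ht : t = k
    · subst ht; simp only [π', Function.update_self]; exact hgreedy
    · simp only [π', Function.update_of_ne ht]; exact hπ t
  calc valH q r γ V k π s = valH q r γ V k π' s := by
        rw [valH_congr V k fun t ht => (Function.update_of_ne ht.ne _ _).symm]
    _ ≤ valH q r γ (fun x => r x + γ * (policyMatrix q greedy *ᵥ V) x) k π' s :=
        valH_mono hq hγ0 hbackup k hπ' s
    _ = valH q r γ V (k + 1) π' s := by
        rw [valH_succ_eq_valH_backup, show π' k = greedy from Function.update_self ..]
    _ ≤ VHopt q r γ V (k + 1) s := valH_le_VHopt hq hγ0 hγ1 V (k + 1) hπ' s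

end FiniteHorizon

section Suboptimality

variable {S A : Type} [Fintype S] [Fintype A] [DecidableEq S]
  {q : S → A → S → ℝ} {r : S → ℝ} {γ : ℝ}

lemma Vinf_sub_valH_le (hq : IsKernel q) (hγ0 : 0 ≤ γ) (hγ1 : γ < 1) {π : S → A → ℝ}
    (hπ : IsStationaryPolicy π) {V : S → ℝ} {c : ℝ} (hc : ∀ s, Vinf q r γ π s - V s ≤ c)
    (k : ℕ) (s : S) : Vinf q r γ π s - valH q r γ V k (fun _ => π) s ≤ γ ^ k * c := by
  induction k generalizing s with
  | zero => simpa [valH] using hc s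
  | succ k ih =>
    have hstep := mulVec_apply_le_of_mem_rowStochastic
      (policyMatrix_mem_rowStochastic hq hπ) (x := Vinf q r γ π - valH q r γ V k fun _ => π) ih s
    rw [mulVec_sub, Pi.sub_apply] at hstep
    rw [Vinf_eq_bellman hq hγ0 hγ1 hπ, valH_succ, pow_succ', mul_assoc]
    linarith [mul_le_mul_of_nonneg_left hstep hγ0]

lemma Vstar_le_VHopt_add [Nonempty A] (hq : IsKernel q) (hγ0 : 0 ≤ γ) (hγ1 : γ < 1)
    {V : S → ℝ} {ε : ℝ} (hε : ∀ s, Vstar q r γ s ≤ V s + ε) (H : ℕ) (s : S) :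
    Vstar q r γ s ≤ VHopt q r γ V H s + γ ^ H * ε := by
  have uniform : IsStationaryPolicy fun (_ : S) (_ : A) => (Fintype.card A : ℝ)⁻¹ := fun _ =>
    ⟨fun _ => by positivity, by simp⟩
  refine csSup_le ⟨_, _, uniform, rfl⟩ ?_
  rintro _ ⟨π, hπ, rfl⟩
  have hc s : Vinf q r γ π s - V s ≤ ε := by linarith [Vinf_le_Vstar (r := r) hq hγ0 hγ1 hπ s, hε s]
  linarith [Vinf_sub_valH_le hq hγ0 hγ1 hπ hc H s,
    valH_le_VHopt (r := r) hq hγ0 hγ1.le V H (π := fun _ => π) (fun _ => hπ) s]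

lemma sub_Vinf_le_of_le_bellman (hq : IsKernel q) (hγ0 : 0 ≤ γ) (hγ1 : γ < 1)
    {π : S → A → ℝ} (hπ : IsStationaryPolicy π) {f : S → ℝ} {δ : ℝ}
    (hf : ∀ s, f s ≤ r s + γ * (policyMatrix q π *ᵥ f) s + δ) (s : S) :
    f s - Vinf q r γ π s ≤ δ / (1 - γ) := by
  refine le_div_one_sub_of_le_mulVec (policyMatrix_mem_rowStochastic hq hπ) hγ0 hγ1
    (g := f - Vinf q r γ π) (fun s => ?_) s
  rw [mulVec_sub, Pi.sub_apply, Pi.sub_apply, Vinf_eq_bellman hq hγ0 hγ1 hπ s]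
  linarith [hf s]

/-- The paper's `Q_H^*(s, π)`, for the reward reshaped by the potential `V`. -/
noncomputable def reshapedQ (q : S → A → S → ℝ) (r : S → ℝ) (γ : ℝ) (V : S → ℝ) (H : ℕ)
    (π : S → A → ℝ) (s : S) : ℝ :=
  ∑ a, π s a * ∑ s', q s a s' *
    (γ * (VHopt q r γ V (H - 1) s' - V s') + (r s + γ * V s' - V s))

lemma reshapedQ_eq (hq : IsKernel q) (V : S → ℝ) (H : ℕ) {π : S → A → ℝ}
    (hπ : IsStationaryPolicy π) (s : S) :
    reshapedQ q r γ V H π s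
      = r s - V s + γ * (policyMatrix q π *ᵥ VHopt q r γ V (H - 1)) s := by
  have hsplit : (fun s' => γ * (VHopt q r γ V (H - 1) s' - V s') + (r s + γ * V s' - V s))
      = γ • VHopt q r γ V (H - 1) + fun _ => r s - V s := by
    ext s'
    simp only [Pi.add_apply, Pi.smul_apply, smul_eq_mul]
    ring
  rw [reshapedQ, ← mulVec_policyMatrix_apply, hsplit, mulVec_add, mulVec_smul,
    mulVec_const_of_mem_rowStochastic (policyMatrix_mem_rowStochastic hq hπ)]
  simp only [Pi.add_apply, Pi.smul_apply, smul_eq_mul]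
  ring

lemma VHopt_le_bellman_of_reshapedQ (hq : IsKernel q) (hγ0 : 0 ≤ γ) (hγ1 : γ ≤ 1)
    {V : S → ℝ} (himp : IsImprovable q r γ V) (H : ℕ) {π : S → A → ℝ}
    (hπ : IsStationaryPolicy π) {δ : ℝ}
    (hQ : ∀ s, reshapedQ q r γ V H π s ≥ VHopt q r γ V H s - V s - δ) (s : S) :
    VHopt q r γ V H s ≤ r s + γ * (policyMatrix q π *ᵥ VHopt q r γ V H) s + δ := by
  have hpred : VHopt q r γ V (H - 1) ≤ VHopt q r γ V H := fun s' => by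
    cases H with
    | zero => rfl -- `0 - 1 = 0` in `ℕ`
    | succ k => exact VHopt_le_VHopt_succ hq hγ0 hγ1 himp k s'
  have hmono := mulVec_mono_of_mem_rowStochastic (policyMatrix_mem_rowStochastic hq hπ) hpred s
  have := hQ s
  rw [reshapedQ_eq hq V H hπ s] at this
  linarith [mul_le_mul_of_nonneg_left hmono hγ0]

end Suboptimality

theorem stmt_7_general {S A : Type} [Fintype S] [Fintype A] [DecidableEq S]
    (p : S → A → S → ℝ) (hp : IsKernel p)
    (r Vsim : S → ℝ) (γ : ℝ) (hγ0 : 0 ≤ γ) (hγ1 : γ < 1)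
    (himp : ∀ s, ∃ a, (∑ s', p s a s' * (γ * Vsim s')) - Vsim s ≥ -(r s))
    (ε : ℝ) (hε : ∀ s, |Vsim s - Vstar p r γ s| < ε)
    (H : ℕ)
    (π : S → A → ℝ) (hπ : IsStationaryPolicy π) (δ : ℝ)
    (hQ : ∀ s : S,
      (∑ a, π s a * ∑ s', p s a s' *
          (γ * (VHopt p r γ Vsim (H - 1) s' - Vsim s')
            + (r s + γ * Vsim s' - Vsim s)))
        ≥ (VHopt p r γ Vsim H s - Vsim s) - δ) :
    ∀ s : S, Vstar p r γ s - Vinf p r γ π s ≤ γ ^ H * ε + δ / (1 - γ) := by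
  intro s
  have : Nonempty A := ⟨(himp s).choose⟩
  have hVstar : ∀ s, Vstar p r γ s ≤ Vsim s + ε := fun s => by
    linarith [(abs_lt.1 (hε s)).1]
  have hbellman := VHopt_le_bellman_of_reshapedQ hp hγ0 hγ1.le himp H hπ hQ
  linarith [Vstar_le_VHopt_add hp hγ0 hγ1 hVstar H s,
    sub_Vinf_le_of_le_bellman hp hγ0 hγ1 hπ hbellman s]

/-- Suboptimality of approximately H-step-optimal policies: if `V_sim` is
improvable, `‖V_sim - V*‖_∞ < ε`, and the stationary policy `π` is `δ`-optimal for the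
H-step reshaped objective (`Q_H^*(s,π) ≥ V_H^*(s) - δ` for all `s`), then
`V*(s) - V^π(s) ≤ γ^H ε + δ/(1-γ)` for all `s`.  Here the reshaped optimal values are
`V_H^*(s) = VHopt p r γ V_sim H s - V_sim s` and
`Q_H^*(s,π) = E_{a∼π(·|s), s'∼p(·|s,a)}[γ V_{H-1}^*(s') + r(s) + γ V_sim(s') - V_sim(s)]`. -/
theorem stmt_7 {S A : Type} [Fintype S] [Fintype A] [DecidableEq S]
    [Nonempty S] [Nonempty A]
    (p : S → A → S → ℝ) (hp : IsKernel p)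
    (r Vsim : S → ℝ) (γ : ℝ) (hγ0 : 0 ≤ γ) (hγ1 : γ < 1)
    (himp : ∀ s, ∃ a, (∑ s', p s a s' * (γ * Vsim s')) - Vsim s ≥ -(r s))
    (ε : ℝ) (hε : ∀ s, |Vsim s - Vstar p r γ s| < ε)
    (H : ℕ) (hH : 1 ≤ H)
    (π : S → A → ℝ) (hπ : IsStationaryPolicy π) (δ : ℝ) (hδ : 0 ≤ δ)
    (hQ : ∀ s : S,
      (∑ a, π s a * ∑ s', p s a s' *
          (γ * (VHopt p r γ Vsim (H - 1) s' - Vsim s')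
            + (r s + γ * Vsim s' - Vsim s)))
        ≥ (VHopt p r γ Vsim H s - Vsim s) - δ) :
    ∀ s : S, Vstar p r γ s - Vinf p r γ π s ≤ γ ^ H * ε + δ / (1 - γ) :=
  stmt_7_general p hp r Vsim γ hγ0 hγ1 himp ε hε H π hπ δ hQ
end

section
/- (Policy invariance under potential-based shaping) For an infinite-horizon discounted MDP, replacing r(s) by r̄(s,s') = r(s) + γΦ(s') - Φ(s) changes every policy's value function by the same state-dependent constant: V̄^π(s) = V^π(s) - Φ(s) for every stationary policy π and state s. Consequently, the set of optimal policies of the reshaped MDP equals that of the original MDP. -/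
open Finset

/-- Infinite-horizon discounted value of stationary policy `π` for a transition-dependent
reward `rbar(s,s')`. -/
noncomputable def VinfShaped {S A : Type} [Fintype S] [Fintype A] [DecidableEq S]
    (q : S → A → S → ℝ) (rbar : S → S → ℝ) (γ : ℝ) (π : S → A → ℝ) (s0 : S) : ℝ :=
  ∑' t : ℕ, γ ^ t * ∑ s, stateDist q π s0 t s *
    ∑ a, π s a * ∑ s', q s a s' * rbar s s'

/-- Optimal infinite-horizon value for the transition-dependent reward `rbar`. -/
noncomputable def VstarShaped {S A : Type} [Fintype S] [Fintype A] [DecidableEq S]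
    (q : S → A → S → ℝ) (rbar : S → S → ℝ) (γ : ℝ) (s0 : S) : ℝ :=
  sSup {x | ∃ π, IsStationaryPolicy π ∧ VinfShaped q rbar γ π s0 = x}

/-!
Along the Markov chain of a stationary policy, the discounted expected shaped reward at time `t`
is the discounted expected reward plus `γ^(t+1) E[Φ(s_(t+1))] - γ^t E[Φ(s_t)]`, so the discounted
series telescopes to `V^π(s) - Φ(s)`; all series converge since `γ < 1` and the state
distributions are probability vectors. Shifting every policy's value by the same `-Φ(s)` shifts
the supremum over policies by `-Φ(s)` too, so the optimal policies coincide.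
-/

section Shaping

variable {S A : Type} [Fintype S] [Fintype A]

theorem sum_pushforward_mul (q : S → A → S → ℝ) (π : S → A → ℝ) (μ f : S → ℝ) :
    ∑ s', pushforward q π μ s' * f s' = ∑ s, μ s * ∑ a, π s a * ∑ s', q s a s' * f s' := by
  simp only [pushforward, Finset.sum_mul, Finset.mul_sum, mul_assoc]
  rw [Finset.sum_comm]
  refine Finset.sum_congr rfl fun s _ => ?_
  rw [Finset.sum_comm]

theorem sum_policy_kernel_mul_const {q : S → A → S → ℝ} (hq : IsKernel q) {π : S → A → ℝ}
    (hπ : IsStationaryPolicy π) (s : S) (c : ℝ) :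
    ∑ a, π s a * ∑ s', q s a s' * c = c := by
  simp only [← Finset.sum_mul, (hq s _).2, one_mul, (hπ s).2]

theorem pushforward_nonneg {q : S → A → S → ℝ} (hq : IsKernel q) {π : S → A → ℝ}
    (hπ : IsStationaryPolicy π) {μ : S → ℝ} (hμ : ∀ s, 0 ≤ μ s) (s' : S) :
    0 ≤ pushforward q π μ s' :=
  Finset.sum_nonneg fun s _ => mul_nonneg (hμ s)
    (Finset.sum_nonneg fun a _ => mul_nonneg ((hπ s).1 a) ((hq s a).1 s'))

theorem sum_pushforward {q : S → A → S → ℝ} (hq : IsKernel q) {π : S → A → ℝ}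
    (hπ : IsStationaryPolicy π) (μ : S → ℝ) :
    ∑ s', pushforward q π μ s' = ∑ s, μ s := by
  have h := sum_pushforward_mul q π μ fun _ => 1
  simp only [sum_policy_kernel_mul_const hq hπ] at h
  simpa using h

theorem sum_mul_expected_shaped_reward {q : S → A → S → ℝ} (hq : IsKernel q)
    {π : S → A → ℝ} (hπ : IsStationaryPolicy π) (μ r Φ : S → ℝ) (γ : ℝ) :
    ∑ s, μ s * ∑ a, π s a * ∑ s', q s a s' * (r s + γ * Φ s' - Φ s) =
      ∑ s, μ s * r s + (γ * ∑ s, pushforward q π μ s * Φ s - ∑ s, μ s * Φ s) := by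
  have hstep : ∀ s, ∑ a, π s a * ∑ s', q s a s' * (r s + γ * Φ s' - Φ s) =
      (r s - Φ s) + γ * ∑ a, π s a * ∑ s', q s a s' * Φ s' := fun s => by
    have hsplit : ∀ a s', q s a s' * (r s + γ * Φ s' - Φ s) =
        q s a s' * (r s - Φ s) + γ * (q s a s' * Φ s') := fun _ _ => by ring
    simp only [hsplit, Finset.sum_add_distrib, ← Finset.mul_sum, mul_add,
      sum_policy_kernel_mul_const hq hπ]
    rw [Finset.mul_sum]
    exact congrArg _ (Finset.sum_congr rfl fun a _ => by ring)
  simp only [hstep, sum_pushforward_mul]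
  rw [Finset.mul_sum, ← Finset.sum_sub_distrib, ← Finset.sum_add_distrib]
  exact Finset.sum_congr rfl fun s _ => by ring

theorem abs_sum_mul_le_norm {μ : S → ℝ} (hμ0 : ∀ s, 0 ≤ μ s) (hμ1 : ∑ s, μ s = 1)
    (g : S → ℝ) : |∑ s, μ s * g s| ≤ ‖g‖ := by
  calc |∑ s, μ s * g s| ≤ ∑ s, μ s * ‖g‖ := by
        refine (Finset.abs_sum_le_sum_abs _ _).trans (Finset.sum_le_sum fun s _ => ?_)
        rw [abs_mul, abs_of_nonneg (hμ0 s)]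
        exact mul_le_mul_of_nonneg_left (norm_le_pi_norm g s) (hμ0 s)
    _ = ‖g‖ := by rw [← Finset.sum_mul, hμ1, one_mul]

theorem summable_geometric_mul_of_abs_le {γ : ℝ} (hγ0 : 0 ≤ γ) (hγ1 : γ < 1) {f : ℕ → ℝ}
    {C : ℝ} (hf : ∀ t, |f t| ≤ C) : Summable fun t => γ ^ t * f t := by
  refine .of_norm_bounded ((summable_geometric_of_lt_one hγ0 hγ1).mul_right C) fun t => ?_
  rw [Real.norm_eq_abs, abs_mul, abs_pow, abs_of_nonneg hγ0]
  exact mul_le_mul_of_nonneg_left (hf t) (pow_nonneg hγ0 t)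

theorem tsum_geometric_mul_le_of_abs_le {γ : ℝ} (hγ0 : 0 ≤ γ) (hγ1 : γ < 1) {f : ℕ → ℝ}
    {C : ℝ} (hf : ∀ t, |f t| ≤ C) : ∑' t, γ ^ t * f t ≤ C / (1 - γ) := by
  calc ∑' t, γ ^ t * f t ≤ ∑' t, γ ^ t * C :=
        (summable_geometric_mul_of_abs_le hγ0 hγ1 hf).tsum_le_tsum
          (fun t => mul_le_mul_of_nonneg_left ((le_abs_self _).trans (hf t)) (pow_nonneg hγ0 t))
          ((summable_geometric_of_lt_one hγ0 hγ1).mul_right C)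
    _ = C / (1 - γ) := by
        rw [tsum_mul_right, tsum_geometric_of_lt_one hγ0 hγ1, div_eq_inv_mul]

theorem Summable.tsum_succ_sub_self {f : ℕ → ℝ} (hf : Summable f) :
    ∑' t, (f (t + 1) - f t) = -f 0 := by
  rw [Summable.tsum_sub ((summable_nat_add_iff 1).2 hf) hf, hf.tsum_eq_zero_add]
  ring

section StateDist

variable [DecidableEq S] {q : S → A → S → ℝ} {π : S → A → ℝ}

theorem stateDist_succ (q : S → A → S → ℝ) (π : S → A → ℝ) (s0 : S) (t : ℕ) :
    stateDist q π s0 (t + 1) = pushforward q π (stateDist q π s0 t) :=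
  Function.iterate_succ_apply' _ _ _

theorem sum_stateDist_zero_mul (q : S → A → S → ℝ) (π : S → A → ℝ) (s0 : S) (f : S → ℝ) :
    ∑ s, stateDist q π s0 0 s * f s = f s0 := by
  simp [stateDist]

theorem stateDist_nonneg (hq : IsKernel q) (hπ : IsStationaryPolicy π) (s0 : S) (t : ℕ)
    (s : S) : 0 ≤ stateDist q π s0 t s := by
  induction t generalizing s with
  | zero => by_cases h : s = s0 <;> simp [stateDist, h]
  | succ t ih => rw [stateDist_succ]; exact pushforward_nonneg hq hπ ih s

theorem sum_stateDist (hq : IsKernel q) (hπ : IsStationaryPolicy π) (s0 : S) (t : ℕ) :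
    ∑ s, stateDist q π s0 t s = 1 := by
  induction t with
  | zero => simp [stateDist]
  | succ t ih => rw [stateDist_succ, sum_pushforward hq hπ, ih]

theorem abs_sum_stateDist_mul_le (hq : IsKernel q) (hπ : IsStationaryPolicy π) (s0 : S)
    (t : ℕ) (g : S → ℝ) : |∑ s, stateDist q π s0 t s * g s| ≤ ‖g‖ :=
  abs_sum_mul_le_norm (stateDist_nonneg hq hπ s0 t) (sum_stateDist hq hπ s0 t) g

theorem summable_discounted_expectation (hq : IsKernel q) (hπ : IsStationaryPolicy π)
    {γ : ℝ} (hγ0 : 0 ≤ γ) (hγ1 : γ < 1) (s0 : S) (g : S → ℝ) :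
    Summable fun t => γ ^ t * ∑ s, stateDist q π s0 t s * g s :=
  summable_geometric_mul_of_abs_le hγ0 hγ1 (abs_sum_stateDist_mul_le hq hπ s0 · g)

theorem vinf_le_norm_div (hq : IsKernel q) (hπ : IsStationaryPolicy π) {γ : ℝ} (hγ0 : 0 ≤ γ)
    (hγ1 : γ < 1) (r : S → ℝ) (s0 : S) : Vinf q r γ π s0 ≤ ‖r‖ / (1 - γ) :=
  tsum_geometric_mul_le_of_abs_le hγ0 hγ1 (abs_sum_stateDist_mul_le hq hπ s0 · r)

theorem vinfShaped_potential_eq (hq : IsKernel q) (hπ : IsStationaryPolicy π) (r Φ : S → ℝ)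
    {γ : ℝ} (hγ0 : 0 ≤ γ) (hγ1 : γ < 1) (s0 : S) :
    VinfShaped q (fun s s' => r s + γ * Φ s' - Φ s) γ π s0 = Vinf q r γ π s0 - Φ s0 := by
  set P : ℕ → ℝ := fun t => γ ^ t * ∑ s, stateDist q π s0 t s * Φ s
  have hP : Summable P := summable_discounted_expectation hq hπ hγ0 hγ1 s0 Φ
  have hrow : ∀ t, γ ^ t * ∑ s, stateDist q π s0 t s *
        ∑ a, π s a * ∑ s', q s a s' * (r s + γ * Φ s' - Φ s) =
      γ ^ t * ∑ s, stateDist q π s0 t s * r s + (P (t + 1) - P t) := fun t => by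
    rw [sum_mul_expected_shaped_reward hq hπ, ← stateDist_succ]
    simp only [P, pow_succ]
    ring
  rw [VinfShaped, tsum_congr hrow,
    (summable_discounted_expectation hq hπ hγ0 hγ1 s0 r).tsum_add
      (((summable_nat_add_iff 1).2 hP).sub hP),
    hP.tsum_succ_sub_self]
  simp only [P, pow_zero, one_mul, sum_stateDist_zero_mul, Vinf, sub_eq_add_neg]

theorem vstarShaped_potential_eq (hq : IsKernel q)
    (hne : ∃ π : S → A → ℝ, IsStationaryPolicy π) (r Φ : S → ℝ) {γ : ℝ} (hγ0 : 0 ≤ γ)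
    (hγ1 : γ < 1) (s0 : S) :
    VstarShaped q (fun s s' => r s + γ * Φ s' - Φ s) γ s0 = Vstar q r γ s0 - Φ s0 := by
  set values := {x | ∃ π, IsStationaryPolicy π ∧ Vinf q r γ π s0 = x}
  have hshift : {x | ∃ π, IsStationaryPolicy π ∧
      VinfShaped q (fun s s' => r s + γ * Φ s' - Φ s) γ π s0 = x} =
      OrderIso.addRight (-Φ s0) '' values := by
    ext x
    constructor
    · rintro ⟨π, hπ, rfl⟩
      exact ⟨_, ⟨π, hπ, rfl⟩,
        ((vinfShaped_potential_eq hq hπ r Φ hγ0 hγ1 s0).trans (sub_eq_add_neg _ _)).symm⟩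
    · rintro ⟨_, ⟨π, hπ, rfl⟩, rfl⟩
      exact ⟨π, hπ, (vinfShaped_potential_eq hq hπ r Φ hγ0 hγ1 s0).trans (sub_eq_add_neg _ _)⟩
  have hbdd : BddAbove values := ⟨‖r‖ / (1 - γ), by
    rintro _ ⟨π, hπ, rfl⟩
    exact vinf_le_norm_div hq hπ hγ0 hγ1 r s0⟩
  obtain ⟨π, hπ⟩ := hne
  have hnonempty : values.Nonempty := ⟨_, π, hπ, rfl⟩
  rw [VstarShaped, hshift, ← OrderIso.map_csSup' _ hnonempty hbdd]
  exact (sub_eq_add_neg _ _).symm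

end StateDist

end Shaping

theorem stmt_10_general {S A : Type} [Fintype S] [Fintype A] [DecidableEq S]
    (p : S → A → S → ℝ) (hp : IsKernel p)
    (r Φ : S → ℝ) (γ : ℝ) (hγ0 : 0 ≤ γ) (hγ1 : γ < 1) :
    (∀ π : S → A → ℝ, IsStationaryPolicy π → ∀ s : S,
      VinfShaped p (fun s s' => r s + γ * Φ s' - Φ s) γ π s = Vinf p r γ π s - Φ s) ∧
    (∀ π : S → A → ℝ, IsStationaryPolicy π →
      ((∀ s : S, Vinf p r γ π s = Vstar p r γ s) ↔
        (∀ s : S, VinfShaped p (fun s s' => r s + γ * Φ s' - Φ s) γ π s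
          = VstarShaped p (fun s s' => r s + γ * Φ s' - Φ s) γ s))) := by
  have hV := fun π (hπ : IsStationaryPolicy π) => vinfShaped_potential_eq hp hπ r Φ hγ0 hγ1
  refine ⟨hV, fun π hπ => forall_congr' fun s => ?_⟩
  rw [hV π hπ s, vstarShaped_potential_eq hp ⟨π, hπ⟩ r Φ hγ0 hγ1 s, sub_left_inj]

/-- Policy invariance under potential-based shaping: replacing `r(s)` by
`r̄(s,s') = r(s) + γΦ(s') - Φ(s)` shifts every stationary policy's value by `-Φ(s)`:
`V̄^π(s) = V^π(s) - Φ(s)`.  Consequently a stationary policy is optimal for the reshaped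
MDP iff it is optimal for the original MDP. -/
theorem stmt_10 {S A : Type} [Fintype S] [Fintype A] [DecidableEq S]
    [Nonempty S] [Nonempty A]
    (p : S → A → S → ℝ) (hp : IsKernel p)
    (r Φ : S → ℝ) (γ : ℝ) (hγ0 : 0 ≤ γ) (hγ1 : γ < 1) :
    (∀ π : S → A → ℝ, IsStationaryPolicy π → ∀ s : S,
      VinfShaped p (fun s s' => r s + γ * Φ s' - Φ s) γ π s = Vinf p r γ π s - Φ s) ∧
    (∀ π : S → A → ℝ, IsStationaryPolicy π →
      ((∀ s : S, Vinf p r γ π s = Vstar p r γ s) ↔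
        (∀ s : S, VinfShaped p (fun s s' => r s + γ * Φ s' - Φ s) γ π s
          = VstarShaped p (fun s s' => r s + γ * Φ s' - Φ s) γ s))) :=
  stmt_10_general p hp r Φ γ hγ0 hγ1
end
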